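/- If $\rho\in L^\infty(\mu)$ is a weak $\ast$-upper gradient of a Lipschitz function $f:X\to\mathbb{R}$, then there is a Borel $\mu$-null set $N\subset X$ such that $\tilde\rho=\operatorname{LIP}(f)\chi_N+\rho\chi_{X\setminus N}$ is a genuine $\ast$-upper gradient of $f$; in particular every weak $\ast$-upper gradient has a $\mu$-a.e. representative that is a genuine $\ast$-upper gradient. -/

import Mathlib

open MeasureTheory Filter Topology Set
open scoped ENNReal NNReal

/-- A curve fragment: a bi-Lipschitz map from a nonempty compact subset of `ℝ` into `X`. -/
structure CurveFragment (X : Type*) [MetricSpace X] where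
  toFun : ℝ → X
  dom : Set ℝ
  compact : IsCompact dom
  nonempty : dom.Nonempty
  biLip : ∃ L : ℝ, 0 < L ∧ ∀ s ∈ dom, ∀ t ∈ dom,
    L⁻¹ * |s - t| ≤ dist (toFun s) (toFun t) ∧ dist (toFun s) (toFun t) ≤ L * |s - t|

namespace CurveFragment

variable {X : Type*} [MetricSpace X]

/-- The image of a curve fragment. -/
def im (γ : CurveFragment X) : Set X := γ.toFun '' γ.dom

/-- The pairs `(a, b)` of endpoints of the gaps of a curve fragment: maximal open intervals
in the convex hull of the domain that do not meet the domain. -/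
def gapPairs (γ : CurveFragment X) : Set (ℝ × ℝ) :=
  {p | p.1 ∈ γ.dom ∧ p.2 ∈ γ.dom ∧ p.1 < p.2 ∧ Set.Ioo p.1 p.2 ∩ γ.dom = ∅}

/-- `gap(γ)`: the sum of `d(γ(aᵢ), γ(bᵢ))` over the gaps `(aᵢ, bᵢ)` of `γ`. -/
noncomputable def gapLength (γ : CurveFragment X) : ℝ≥0∞ :=
  ∑' p : γ.gapPairs, edist (γ.toFun (p : ℝ × ℝ).1) (γ.toFun (p : ℝ × ℝ).2)

end CurveFragment

/-- The (global) Lipschitz constant `LIP(f)` of `f`, as an element of `ℝ≥0∞`. -/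
noncomputable def eLipConst {X : Type*} [MetricSpace X] (f : X → ℝ) : ℝ≥0∞ :=
  ⨅ (K : ℝ≥0) (_ : LipschitzWith K f), (K : ℝ≥0∞)

variable {X : Type*} [MetricSpace X] [MeasurableSpace X] [BorelSpace X]

/-- The `∞`-modulus of a family of curve fragments. -/
noncomputable def ModInfty (μ : Measure X) (Γ : Set (CurveFragment X)) : ℝ≥0∞ :=
  ⨅ (ρ : X → ℝ≥0∞) (_ : Measurable ρ)
    (_ : ∀ γ ∈ Γ, 1 ≤ ∫⁻ x in γ.im, ρ x ∂(μH[1] : Measure X)), essSup ρ μ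

/-- The `∗`-upper gradient inequality
`osc_γ f ≤ ∫_{im γ} g dH¹ + LIP(f) · gap(γ)` along a single curve fragment `γ`. -/
def StarUGIneqOn (f : X → ℝ) (g : X → ℝ≥0∞) (γ : CurveFragment X) : Prop :=
  ∀ s ∈ γ.dom, ∀ t ∈ γ.dom,
    ENNReal.ofReal |f (γ.toFun s) - f (γ.toFun t)| ≤
      (∫⁻ x in γ.im, g x ∂(μH[1] : Measure X)) + eLipConst f * γ.gapLength

/-- `g` is a `∗`-upper gradient of `f`. -/
def IsStarUG (f : X → ℝ) (g : X → ℝ≥0∞) : Prop :=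
  ∀ γ : CurveFragment X, StarUGIneqOn f g γ

/-- `g` is a weak `∗`-upper gradient of `f`: the `∗`-upper gradient inequality holds for all
curve fragments outside a family of `∞`-modulus zero. -/
def IsWeakStarUG (μ : Measure X) (f : X → ℝ) (g : X → ℝ≥0∞) : Prop :=
  ∃ Γ₀ : Set (CurveFragment X), ModInfty μ Γ₀ = 0 ∧
    ∀ γ ∉ Γ₀, StarUGIneqOn f g γ

/-- `D` is a (the) minimal `∗`-upper gradient `|Df|_∗` of `f`: a genuine `∗`-upper gradient
which is `μ`-a.e. below any weak `∗`-upper gradient lying in `L^∞(μ)`. -/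
def IsMinimalStarUG (μ : Measure X) (f : X → ℝ) (D : X → ℝ≥0∞) : Prop :=
  Measurable D ∧ IsStarUG f D ∧
    ∀ g : X → ℝ≥0∞, Measurable g → essSup g μ < ⊤ → IsWeakStarUG μ f g →
      ∀ᵐ x ∂μ, D x ≤ g x

/-!
Because `Γ₀` has `∞`-modulus zero, a sum of admissible functions with geometrically small
`L^∞` norms gives a Borel `g` with `∫_γ g = ∞` on `Γ₀` and `g ≤ 2` off a `μ`-null Borel set `N`;
so every fragment meeting `N` in an `H¹`-null set lies outside `Γ₀`. Given any fragment `γ` and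
parameters `s ≤ t`, restrict `γ` to `{s, t}` and a compact `K` that exhausts, up to small measure,
the parameters of `[s, t]` mapped outside `N`. The weak inequality holds along this restriction.
Its integral is at most that of `ρ̃` off `N`; its new gaps cost at most the `H¹`-measure of the
discarded arcs, since `dist (γ ·) (γ a)` takes every intermediate value either on the domain or
across a gap. The discarded arcs inside `N` are paid for by `ρ̃ = LIP(f)` there, the others have
arbitrarily small length.
-/

def gapSet (E : Set ℝ) : Set (ℝ × ℝ) :=
  {p | p.1 ∈ E ∧ p.2 ∈ E ∧ p.1 < p.2 ∧ Ioo p.1 p.2 ∩ E = ∅}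

def gapIn (E : Set ℝ) (a b : ℝ) : Set (ℝ × ℝ) :=
  {p | p ∈ gapSet E ∧ a ≤ p.1 ∧ p.2 ≤ b}

lemma eq_of_mem_gapSet_of_mem_Ioo {E : Set ℝ} {p q : ℝ × ℝ} (hp : p ∈ gapSet E)
    (hq : q ∈ gapSet E) {x : ℝ} (hxp : x ∈ Ioo p.1 p.2) (hxq : x ∈ Ioo q.1 q.2) : p = q := by
  have notMem : ∀ {u v w : ℝ}, Ioo u v ∩ E = ∅ → w ∈ E → w ∉ Ioo u v :=
    fun h hw hw' => (eq_empty_iff_forall_notMem.1 h _) ⟨hw', hw⟩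
  obtain ⟨hp₁, hp₂, -, hpE⟩ := hp
  obtain ⟨hq₁, hq₂, -, hqE⟩ := hq
  ext
  · exact le_antisymm (not_lt.1 fun h => notMem hqE hp₁ ⟨h, hxp.1.trans hxq.2⟩)
      (not_lt.1 fun h => notMem hpE hq₁ ⟨h, hxq.1.trans hxp.2⟩)
  · exact le_antisymm (not_lt.1 fun h => notMem hpE hq₂ ⟨hxp.1.trans hxq.2, h⟩)
      (not_lt.1 fun h => notMem hqE hp₂ ⟨hxq.1.trans hxp.2, h⟩)

lemma gapSet_countable (E : Set ℝ) : (gapSet E).Countable := by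
  choose r hr using fun p : gapSet E => exists_rat_btwn p.2.2.2.1
  refine countable_coe_iff.mp (Function.Injective.countable (f := r) fun p q hpq => ?_)
  exact Subtype.ext (eq_of_mem_gapSet_of_mem_Ioo p.2 q.2 (hr p) (hpq ▸ hr q))

lemma IsCompact.exists_mem_gapIn_of_notMem_image {E : Set ℝ} (hE : IsCompact E) {h : ℝ → ℝ}
    (hh : ContinuousOn h E) {a b r : ℝ} (ha : a ∈ E) (hb : b ∈ E) (hab : a ≤ b)
    (hr : r ∈ Icc (h a) (h b)) (hrE : r ∉ h '' (E ∩ Icc a b)) :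
    ∃ p ∈ gapIn E a b, r ∈ Ioo (h p.1) (h p.2) := by
  set E' := E ∩ Icc a b
  have hE' : IsCompact E' := hE.inter_right isClosed_Icc
  have hh' : ContinuousOn h E' := hh.mono inter_subset_left
  have hne : ∀ u ∈ E', h u ≠ r := fun u hu hur => hrE ⟨u, hu, hur⟩
  obtain ⟨q, ⟨hqE', hrq⟩, hq_min⟩ := (hE'.of_isClosed_subset
    (hh'.preimage_isClosed_of_isClosed hE'.isClosed isClosed_Ici) inter_subset_left).exists_isLeast
    ⟨b, ⟨hb, hab, le_rfl⟩, hr.2⟩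
  obtain ⟨p, ⟨⟨hpE', hpr⟩, hpq⟩, hp_max⟩ := (hE'.of_isClosed_subset
    ((hh'.preimage_isClosed_of_isClosed hE'.isClosed isClosed_Iic).inter isClosed_Iic)
    (inter_subset_left.trans inter_subset_left)).exists_isGreatest
    ⟨a, ⟨⟨ha, le_rfl, hab⟩, hr.1⟩, hqE'.2.1⟩
  have hpr : h p < r := lt_of_le_of_ne hpr (hne p hpE')
  have hrq : r < h q := lt_of_le_of_ne hrq (hne q hqE').symm
  have hgap : Ioo p q ∩ E = ∅ := by
    refine eq_empty_iff_forall_notMem.2 fun u ⟨⟨hpu, huq⟩, huE⟩ => ?_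
    have huE' : u ∈ E' := ⟨huE, hpE'.2.1.trans hpu.le, huq.le.trans hqE'.2.2⟩
    rcases (hne u huE').lt_or_gt with hur | hur
    · exact (hp_max ⟨⟨huE', hur.le⟩, huq.le⟩).not_gt hpu
    · exact (hq_min ⟨huE', hur.le⟩).not_gt huq
  have hpq : p < q := hpq.lt_of_ne (by rintro rfl; exact (hpr.trans hrq).false)
  exact ⟨(p, q), ⟨⟨hpE'.1, hqE'.1, hpq, hgap⟩, hpE'.2.1, hqE'.2.2⟩, hpr, hrq⟩

-- `γ.gapLength` is `gapSum γ.toFun (gapSet γ.dom)` by definition.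
noncomputable def gapSum {Y : Type*} [EDist Y] (φ : ℝ → Y) (S : Set (ℝ × ℝ)) : ℝ≥0∞ :=
  ∑' p : S, edist (φ p.1.1) (φ p.1.2)

lemma edist_le_hausdorffMeasure_add_gapSum {φ : ℝ → X} {E : Set ℝ} (hE : IsCompact E)
    (hφ : ContinuousOn φ E) {a b : ℝ} (ha : a ∈ E) (hb : b ∈ E) (hab : a ≤ b) :
    edist (φ a) (φ b) ≤ μH[1] (φ '' (E ∩ Ioo a b)) + gapSum φ (gapIn E a b) := by
  set h : ℝ → ℝ := fun u => dist (φ u) (φ a)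
  have hh : ContinuousOn h E := (continuous_id.dist continuous_const).comp_continuousOn hφ
  have cover : Ioo (h a) (h b) ⊆
      h '' (E ∩ Ioo a b) ∪ ⋃ p ∈ gapIn E a b, Ioo (h p.1) (h p.2) := by
    intro r hr
    by_cases hrE : r ∈ h '' (E ∩ Icc a b)
    · obtain ⟨u, ⟨huE, hau, hub⟩, rfl⟩ := hrE
      refine Or.inl ⟨u, ⟨huE, hau.lt_of_ne ?_, hub.lt_of_ne ?_⟩, rfl⟩
      · rintro rfl; exact hr.1.false
      · rintro rfl; exact hr.2.false
    · obtain ⟨p, hp, hrp⟩ :=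
        hE.exists_mem_gapIn_of_notMem_image hh ha hb hab (Ioo_subset_Icc_self hr) hrE
      exact Or.inr (mem_biUnion hp hrp)
  have hvol_image : volume (h '' (E ∩ Ioo a b)) ≤ μH[1] (φ '' (E ∩ Ioo a b)) := by
    rw [← hausdorffMeasure_real, ← image_image (fun x => dist x (φ a))]
    simpa using (LipschitzWith.dist_left (φ a)).hausdorffMeasure_image_le zero_le_one (φ '' _)
  have hvol_gap (p : ℝ × ℝ) : volume (Ioo (h p.1) (h p.2)) ≤ edist (φ p.1) (φ p.2) := by
    rw [Real.volume_Ioo, edist_dist, dist_comm]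
    exact ENNReal.ofReal_le_ofReal ((le_abs_self _).trans (abs_dist_sub_le _ _ _))
  calc edist (φ a) (φ b) = volume (Ioo (h a) (h b)) := by
        simp [h, Real.volume_Ioo, edist_dist, dist_comm]
    _ ≤ volume (h '' (E ∩ Ioo a b)) + volume (⋃ p ∈ gapIn E a b, Ioo (h p.1) (h p.2)) :=
        (measure_mono cover).trans (measure_union_le _ _)
    _ ≤ μH[1] (φ '' (E ∩ Ioo a b)) + ∑' p : gapIn E a b, volume (Ioo (h p.1.1) (h p.1.2)) :=
        add_le_add hvol_image (measure_biUnion_le _ ((gapSet_countable E).mono fun _ hp => hp.1) _)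
    _ ≤ _ := add_le_add le_rfl (ENNReal.tsum_le_tsum fun p => hvol_gap p)

lemma mem_Ioo_of_mem_gapIn {E : Set ℝ} {a b : ℝ} {q : ℝ × ℝ} (hq : q ∈ gapIn E a b) {x : ℝ}
    (hx : x ∈ Ioo q.1 q.2) : x ∈ Ioo a b :=
  ⟨hq.2.1.trans_lt hx.1, hx.2.trans_le hq.2.2⟩

lemma tsum_gapSum_gapIn_le {Y : Type*} [EDist Y] (φ : ℝ → Y) (K E : Set ℝ) :
    ∑' p : gapSet K, gapSum φ (gapIn E p.1.1 p.1.2) ≤ gapSum φ (gapSet E) := by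
  let F : (Σ p : gapSet K, gapIn E p.1.1 p.1.2) → gapSet E := fun x => ⟨x.2, x.2.2.1⟩
  have hF : F.Injective := by
    rintro ⟨p, q⟩ ⟨p', q'⟩ h
    have hqq' : (q : ℝ × ℝ) = q' := congrArg Subtype.val h
    obtain ⟨x, hx⟩ := nonempty_Ioo.2 q.2.1.2.2.1
    obtain rfl : p = p' := Subtype.ext <| eq_of_mem_gapSet_of_mem_Ioo p.2 p'.2
      (mem_Ioo_of_mem_gapIn q.2 hx) (mem_Ioo_of_mem_gapIn q'.2 (hqq' ▸ hx))
    exact congrArg _ (Subtype.ext hqq')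
  calc ∑' p : gapSet K, gapSum φ (gapIn E p.1.1 p.1.2)
      = ∑' x : (Σ p : gapSet K, gapIn E p.1.1 p.1.2), edist (φ (F x).1.1) (φ (F x).1.2) :=
        (ENNReal.tsum_sigma' fun x => edist (φ (F x).1.1) (φ (F x).1.2)).symm
    _ ≤ gapSum φ (gapSet E) :=
        ENNReal.tsum_comp_le_tsum_of_injective hF fun q => edist (φ q.1.1) (φ q.1.2)

lemma gapSum_gapSet_le {φ : ℝ → X} {E K : Set ℝ} (hE : IsCompact E) (hφ : ContinuousOn φ E)
    (hinj : InjOn φ E) (hKE : K ⊆ E) {s t : ℝ} (hKst : K ⊆ Icc s t) :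
    gapSum φ (gapSet K) ≤ μH[1] (φ '' ((E ∩ Icc s t) \ K)) + gapSum φ (gapSet E) := by
  set V : gapSet K → Set X := fun p => φ '' (E ∩ Ioo p.1.1 p.1.2)
  have hV_meas (p : gapSet K) : MeasurableSet (V p) :=
    (hE.isClosed.measurableSet.inter measurableSet_Ioo).image_of_continuousOn_injOn
      (hφ.mono inter_subset_left) (hinj.mono inter_subset_left)
  have hV_disj : Pairwise fun p q => Disjoint (V p) (V q) := by
    refine fun p q hpq => disjoint_left.2 ?_
    rintro _ ⟨u, ⟨huE, hup⟩, rfl⟩ ⟨v, ⟨hvE, hvq⟩, hvu⟩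
    obtain rfl := hinj hvE huE hvu
    exact hpq (Subtype.ext (eq_of_mem_gapSet_of_mem_Ioo p.2 q.2 hup hvq))
  have hV_sub : (⋃ p, V p) ⊆ φ '' ((E ∩ Icc s t) \ K) := by
    refine iUnion_subset fun p => image_mono fun u ⟨huE, hup⟩ =>
      ⟨⟨huE, (hKst p.2.1).1.trans hup.1.le, hup.2.le.trans (hKst p.2.2.1).2⟩, fun huK => ?_⟩
    exact (eq_empty_iff_forall_notMem.1 p.2.2.2.2 u) ⟨hup, huK⟩
  calc gapSum φ (gapSet K)
      ≤ ∑' p : gapSet K, (μH[1] (V p) + gapSum φ (gapIn E p.1.1 p.1.2)) :=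
        ENNReal.tsum_le_tsum fun p => edist_le_hausdorffMeasure_add_gapSum hE hφ (hKE p.2.1)
          (hKE p.2.2.1) p.2.2.2.1.le
    _ = ∑' p : gapSet K, μH[1] (V p) + ∑' p : gapSet K, gapSum φ (gapIn E p.1.1 p.1.2) :=
        ENNReal.tsum_add
    _ ≤ _ := add_le_add ((tsum_meas_le_meas_iUnion_of_disjoint _ hV_meas hV_disj).trans
        (measure_mono hV_sub)) (tsum_gapSum_gapIn_le φ K E)

lemma LipschitzOnWith.hausdorffMeasure_one_image_le {φ : ℝ → X} {L : ℝ≥0} {S : Set ℝ}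
    (h : LipschitzOnWith L φ S) : μH[1] (φ '' S) ≤ L * volume S := by
  simpa [hausdorffMeasure_real] using h.hausdorffMeasure_image_le zero_le_one

lemma ContinuousOn.measurableSet_inter_preimage {α β : Type*} [TopologicalSpace α]
    [MeasurableSpace α] [OpensMeasurableSpace α] [TopologicalSpace β] [MeasurableSpace β]
    [BorelSpace β] {φ : α → β} {E : Set α} (hφ : ContinuousOn φ E)
    (hE : MeasurableSet E) {N : Set β} (hN : MeasurableSet N) : MeasurableSet (E ∩ φ ⁻¹' N) := by
  rw [← Subtype.image_preimage_coe]
  exact hE.subtype_image (hφ.domRestrict.measurable hN)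

lemma setLIntegral_le_setLIntegral_sdiff_of_inter_null {Ω : Type*} [MeasurableSpace Ω]
    {ν : Measure Ω} {g h : Ω → ℝ≥0∞} {s t N : Set Ω} (hs : MeasurableSet s)
    (hN : MeasurableSet N) (hst : s ⊆ t) (hsN : ν (s ∩ N) = 0) (hgh : ∀ x ∉ N, g x = h x) :
    ∫⁻ x in s, g x ∂ν ≤ ∫⁻ x in t \ N, h x ∂ν :=
  calc ∫⁻ x in s, g x ∂ν = ∫⁻ x in s \ N, h x ∂ν := by
        rw [setLIntegral_congr (sdiff_ae_eq_self.2 hsN).symm]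
        exact setLIntegral_congr_fun (hs.diff hN) fun x hx => hgh x hx.2
    _ ≤ ∫⁻ x in t \ N, h x ∂ν := lintegral_mono_set (sdiff_subset_sdiff_left hst)

open scoped Classical in
lemma setLIntegral_ite_eq {Ω : Type*} [MeasurableSpace Ω] {ν : Measure Ω} {N s : Set Ω}
    (hN : MeasurableSet N) (hs : MeasurableSet s) (c : ℝ≥0∞) (g : Ω → ℝ≥0∞) :
    ∫⁻ x in s, (if x ∈ N then c else g x) ∂ν =
      (∫⁻ x in s \ N, (if x ∈ N then c else g x) ∂ν) + c * ν (s ∩ N) := by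
  rw [← lintegral_inter_add_sdiff _ s hN, add_comm,
    setLIntegral_congr_fun (hs.inter hN) fun x hx => if_pos hx.2, setLIntegral_const]

lemma exists_isCompact_hausdorffMeasure_image_sdiff_lt {φ : ℝ → X} {L : ℝ≥0} {B : Set ℝ}
    (hφ : LipschitzOnWith L φ B) (hB : MeasurableSet B) (hB_fin : volume B ≠ ⊤) {ε : ℝ≥0∞}
    (hε : 0 < ε) : ∃ K ⊆ B, IsCompact K ∧ μH[1] (φ '' (B \ K)) < ε := by
  obtain ⟨K, hKB, hK, hBK⟩ :=
    hB.exists_isCompact_lt_add hB_fin (ENNReal.div_pos hε.ne' ENNReal.coe_ne_top).ne'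
  have hvol : volume (B \ K) < ε / L :=
    measure_sdiff_lt_of_lt_add hK.measurableSet.nullMeasurableSet hKB
      (ne_top_of_le_ne_top hB_fin (measure_mono hKB)) hBK
  exact ⟨K, hKB, hK, ((hφ.mono sdiff_subset).hausdorffMeasure_one_image_le).trans_lt
    (ENNReal.mul_lt_of_lt_div' hvol)⟩

namespace CurveFragment

variable {Y : Type*} [MetricSpace Y]

lemma exists_lipschitzOnWith (γ : CurveFragment Y) :
    ∃ L : ℝ≥0, LipschitzOnWith L γ.toFun γ.dom := by
  obtain ⟨L, hL, hbi⟩ := γ.biLip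
  refine ⟨L.toNNReal, LipschitzOnWith.of_dist_le_mul fun u hu v hv => ?_⟩
  rw [Real.coe_toNNReal L hL.le, Real.dist_eq]
  exact (hbi u hu v hv).2

lemma continuousOn (γ : CurveFragment Y) : ContinuousOn γ.toFun γ.dom :=
  γ.exists_lipschitzOnWith.choose_spec.continuousOn

lemma injOn (γ : CurveFragment Y) : InjOn γ.toFun γ.dom := by
  obtain ⟨L, hL, hbi⟩ := γ.biLip
  intro u hu v hv huv
  have h := (hbi u hu v hv).1
  rw [huv, dist_self, ← mul_zero L⁻¹] at h
  exact sub_eq_zero.1 (abs_nonpos_iff.1 (le_of_mul_le_mul_left h (inv_pos.2 hL)))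

def restrict (γ : CurveFragment Y) (K : Set ℝ) (hK : IsCompact K)
    (hne : K.Nonempty) (hKγ : K ⊆ γ.dom) : CurveFragment Y where
  toFun := γ.toFun
  dom := K
  compact := hK
  nonempty := hne
  biLip := by
    obtain ⟨L, hL, hbi⟩ := γ.biLip
    exact ⟨L, hL, fun s hs t ht => hbi s (hKγ hs) t (hKγ ht)⟩

lemma measurableSet_im (γ : CurveFragment X) : MeasurableSet γ.im :=
  (γ.compact.image_of_continuousOn γ.continuousOn).isClosed.measurableSet

lemma gapLength_restrict_le (γ : CurveFragment X) {K : Set ℝ} (hK : IsCompact K)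
    (hne : K.Nonempty) (hKγ : K ⊆ γ.dom) {s t : ℝ} (hKst : K ⊆ Icc s t) :
    (γ.restrict K hK hne hKγ).gapLength ≤
      μH[1] (γ.toFun '' ((γ.dom ∩ Icc s t) \ K)) + γ.gapLength :=
  gapSum_gapSet_le γ.compact γ.continuousOn γ.injOn hKγ hKst

lemma hausdorffMeasure_im_lt_top (γ : CurveFragment X) : μH[1] γ.im < ⊤ := by
  obtain ⟨L, hL⟩ := γ.exists_lipschitzOnWith
  exact hL.hausdorffMeasure_one_image_le.trans_lt
    (ENNReal.mul_lt_top ENNReal.coe_lt_top γ.compact.measure_lt_top)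

end CurveFragment

section Modulus

variable {μ : Measure X} {Γ : Set (CurveFragment X)}

lemma exists_admissible_essSup_lt_of_modInfty_eq_zero (hΓ : ModInfty μ Γ = 0) {ε : ℝ≥0∞}
    (hε : 0 < ε) : ∃ g : X → ℝ≥0∞, Measurable g ∧
      (∀ γ ∈ Γ, 1 ≤ ∫⁻ x in γ.im, g x ∂μH[1]) ∧ essSup g μ < ε := by
  have h : ModInfty μ Γ < ε := hΓ ▸ hε
  simpa only [ModInfty, iInf_lt_iff, exists_prop] using h

lemma exists_forall_lintegral_eq_top_of_modInfty_eq_zero (hΓ : ModInfty μ Γ = 0) :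
    ∃ g : X → ℝ≥0∞, Measurable g ∧ (∀ᵐ x ∂μ, g x ≤ 2) ∧
      ∀ γ ∈ Γ, ∫⁻ x in γ.im, g x ∂μH[1] = ⊤ := by
  choose g hg_meas hg_adm hg_sup using fun n : ℕ =>
    exists_admissible_essSup_lt_of_modInfty_eq_zero hΓ (ε := 2⁻¹ ^ n)
      (ENNReal.pow_pos (by norm_num) n)
  refine ⟨fun x => ∑' n, g n x, Measurable.tsum hg_meas, ?_, fun γ hγ => ?_⟩
  · have hg_le : ∀ᵐ x ∂μ, ∀ n, g n x ≤ 2⁻¹ ^ n := ae_all_iff.2 fun n =>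
      (ENNReal.ae_le_essSup (g n)).mono fun x hx => hx.trans (hg_sup n).le
    filter_upwards [hg_le] with x hx
    calc ∑' n, g n x ≤ ∑' n : ℕ, (2⁻¹ : ℝ≥0∞) ^ n := ENNReal.tsum_le_tsum hx
      _ = 2 := by rw [ENNReal.tsum_geometric, ENNReal.one_sub_inv_two, inv_inv]
  · rw [lintegral_tsum fun n => (hg_meas n).aemeasurable]
    exact top_unique ((ENNReal.tsum_const_eq_top_of_ne_zero one_ne_zero).symm.le.trans
      (ENNReal.tsum_le_tsum fun n => hg_adm n γ hγ))

lemma exists_null_forall_notMem_of_modInfty_eq_zero (hΓ : ModInfty μ Γ = 0) :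
    ∃ N : Set X, MeasurableSet N ∧ μ N = 0 ∧
      ∀ γ : CurveFragment X, μH[1] (γ.im ∩ N) = 0 → γ ∉ Γ := by
  obtain ⟨g, hg_meas, hg_le, hg_top⟩ := exists_forall_lintegral_eq_top_of_modInfty_eq_zero hΓ
  have hN : MeasurableSet {x | 2 < g x} := measurableSet_lt measurable_const hg_meas
  refine ⟨{x | 2 < g x}, hN, by simpa [ae_iff] using hg_le, fun γ hγN hγ => ?_⟩
  have hg_le_γ : ∀ᵐ x ∂(μH[1].restrict γ.im), g x ≤ 2 := by
    rw [ae_iff]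
    simpa [Measure.restrict_apply hN, inter_comm] using hγN
  have : ∫⁻ x in γ.im, g x ∂μH[1] < ⊤ :=
    calc ∫⁻ x in γ.im, g x ∂μH[1] ≤ ∫⁻ _ in γ.im, 2 ∂μH[1] := lintegral_mono_ae hg_le_γ
      _ = 2 * μH[1] γ.im := setLIntegral_const _ _
      _ < ⊤ := ENNReal.mul_lt_top ENNReal.ofNat_lt_top γ.hausdorffMeasure_im_lt_top
  exact this.ne (hg_top γ hγ)

end Modulus

section Representative

variable {f : X → ℝ} {ρ : X → ℝ≥0∞} {N : Set X}

open scoped Classical in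
lemma ofReal_abs_sub_le_of_isCompact_subset (hN : MeasurableSet N)
    (hρ : ∀ γ : CurveFragment X, μH[1] (γ.im ∩ N) = 0 → StarUGIneqOn f ρ γ)
    (γ : CurveFragment X) {s t : ℝ} (hs : s ∈ γ.dom) (ht : t ∈ γ.dom) (hst : s ≤ t)
    {K : Set ℝ} (hK : IsCompact K) (hKB : K ⊆ (γ.dom ∩ Icc s t) \ γ.toFun ⁻¹' N) :
    ENNReal.ofReal |f (γ.toFun s) - f (γ.toFun t)| ≤
      (∫⁻ x in γ.im, (if x ∈ N then eLipConst f else ρ x) ∂μH[1]) +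
        eLipConst f * γ.gapLength +
        eLipConst f * μH[1] (γ.toFun '' (((γ.dom ∩ Icc s t) \ γ.toFun ⁻¹' N) \ K)) := by
  set ρ' : X → ℝ≥0∞ := fun x => if x ∈ N then eLipConst f else ρ x
  set E' := γ.dom ∩ Icc s t
  set K' := insert s (insert t K)
  have hK'E : K' ⊆ γ.dom := insert_subset hs (insert_subset ht fun u hu => (hKB hu).1.1)
  have hK'st : K' ⊆ Icc s t :=
    insert_subset ⟨le_rfl, hst⟩ (insert_subset ⟨hst, le_rfl⟩ fun u hu => (hKB hu).1.2)
  set γ' := γ.restrict K' ((hK.insert t).insert s) (insert_nonempty _ _) hK'E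
  -- `γ'` meets `N` at most at its endpoints, so the weak inequality applies to it.
  have hγ'N : μH[1] (γ'.im ∩ N) = 0 := by
    have := Measure.nullSingletonClass_hausdorff X one_pos
    refine measure_mono_null (t := {γ.toFun s, γ.toFun t}) ?_ ((toFinite _).measure_zero _)
    rintro _ ⟨⟨u, hu, rfl⟩, huN⟩
    rcases hu with rfl | rfl | hu
    · exact Or.inl rfl
    · exact Or.inr rfl
    · exact absurd huN (hKB hu).2
  have hsplit : E' \ K' ⊆ (E' ∩ γ.toFun ⁻¹' N) ∪ ((E' \ γ.toFun ⁻¹' N) \ K) := by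
    rintro u ⟨huE', huK'⟩
    by_cases huN : γ.toFun u ∈ N
    · exact Or.inl ⟨huE', huN⟩
    · exact Or.inr ⟨⟨huE', huN⟩, fun huK => huK' (mem_insert_of_mem _ (mem_insert_of_mem _ huK))⟩
  have hA : γ.toFun '' (E' ∩ γ.toFun ⁻¹' N) ⊆ γ.im ∩ N := by
    rintro _ ⟨u, ⟨⟨hu, -⟩, huN⟩, rfl⟩
    exact ⟨mem_image_of_mem _ hu, huN⟩
  calc ENNReal.ofReal |f (γ.toFun s) - f (γ.toFun t)|
      ≤ (∫⁻ x in γ'.im, ρ x ∂μH[1]) + eLipConst f * γ'.gapLength :=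
        hρ γ' hγ'N s (mem_insert _ _) t (mem_insert_of_mem _ (mem_insert _ _))
    _ ≤ (∫⁻ x in γ.im \ N, ρ' x ∂μH[1]) +
          eLipConst f * (μH[1] (γ.toFun '' (E' \ K')) + γ.gapLength) := by
        gcongr ?_ + _ * ?_
        · exact setLIntegral_le_setLIntegral_sdiff_of_inter_null γ'.measurableSet_im hN
            (image_mono hK'E) hγ'N fun x hx => (if_neg hx).symm
        · exact γ.gapLength_restrict_le _ _ hK'E hK'st
    _ ≤ (∫⁻ x in γ.im \ N, ρ' x ∂μH[1]) + eLipConst f * (μH[1] (γ.im ∩ N) +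
          μH[1] (γ.toFun '' ((E' \ γ.toFun ⁻¹' N) \ K)) + γ.gapLength) := by
        gcongr
        refine (measure_mono (image_mono hsplit)).trans ?_
        rw [image_union]
        exact (measure_union_le _ _).trans (by gcongr)
    _ = _ := by
        rw [setLIntegral_ite_eq hN γ.measurableSet_im]
        ring

open scoped Classical in
theorem isStarUG_ite_of_forall_null_inter (hf : eLipConst f ≠ ⊤) (hN : MeasurableSet N)
    (hρ : ∀ γ : CurveFragment X, μH[1] (γ.im ∩ N) = 0 → StarUGIneqOn f ρ γ) :
    IsStarUG f (fun x => if x ∈ N then eLipConst f else ρ x) := by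
  suffices h : ∀ γ : CurveFragment X, ∀ s ∈ γ.dom, ∀ t ∈ γ.dom, s ≤ t →
      ENNReal.ofReal |f (γ.toFun s) - f (γ.toFun t)| ≤
        (∫⁻ x in γ.im, (if x ∈ N then eLipConst f else ρ x) ∂μH[1]) +
          eLipConst f * γ.gapLength by
    intro γ s hs t ht
    rcases le_total s t with hst | hts
    · exact h γ s hs t ht hst
    · rw [abs_sub_comm]
      exact h γ t ht s hs hts
  intro γ s hs t ht hst
  obtain ⟨L, hL⟩ := γ.exists_lipschitzOnWith
  set B := (γ.dom ∩ Icc s t) \ γ.toFun ⁻¹' N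
  have hB : MeasurableSet B := by
    have hE' := γ.compact.isClosed.measurableSet.inter (measurableSet_Icc (a := s) (b := t))
    rw [show B = _ from sdiff_self_inter.symm]
    exact hE'.diff ((γ.continuousOn.mono inter_subset_left).measurableSet_inter_preimage hE' hN)
  have hB_fin : volume B ≠ ⊤ :=
    ne_top_of_le_ne_top measure_Icc_lt_top.ne (measure_mono fun u hu => hu.1.2)
  refine ENNReal.le_of_forall_pos_le_add fun δ hδ _ => ?_
  obtain ⟨K, hKB, hK, hKδ⟩ := exists_isCompact_hausdorffMeasure_image_sdiff_lt
    (hL.mono fun u hu => hu.1.1) hB hB_fin (ε := δ / eLipConst f)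
    (ENNReal.div_pos_iff.2 ⟨by exact_mod_cast hδ.ne', hf⟩)
  calc _ ≤ _ := ofReal_abs_sub_le_of_isCompact_subset hN hρ γ hs ht hst hK hKB
    _ ≤ _ := add_le_add le_rfl (ENNReal.mul_div_le.trans' (by gcongr))

end Representative

lemma LipschitzWith.eLipConst_ne_top {Y : Type*} [MetricSpace Y] {f : Y → ℝ} {K : ℝ≥0}
    (hf : LipschitzWith K f) : eLipConst f ≠ ⊤ :=
  ne_top_of_le_ne_top ENNReal.coe_ne_top (iInf₂_le K hf)

open scoped Classical in
theorem weakStarUG_ae_representative_general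
    (μ : Measure X)
    (f : X → ℝ) (hf : ∃ K : ℝ≥0, LipschitzWith K f)
    (ρ : X → ℝ≥0∞)
    (hUG : IsWeakStarUG μ f ρ) :
    ∃ N : Set X, MeasurableSet N ∧ μ N = 0 ∧
      IsStarUG f (fun x => if x ∈ N then eLipConst f else ρ x) ∧
      (fun x => if x ∈ N then eLipConst f else ρ x) =ᵐ[μ] ρ := by
  obtain ⟨K, hK⟩ := hf
  obtain ⟨Γ₀, hΓ₀, hρ⟩ := hUG
  obtain ⟨N, hN, hμN, hΓ₀N⟩ := exists_null_forall_notMem_of_modInfty_eq_zero hΓ₀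
  refine ⟨N, hN, hμN, isStarUG_ite_of_forall_null_inter hK.eLipConst_ne_top hN
    fun γ hγN => hρ γ (hΓ₀N γ hγN), ?_⟩
  filter_upwards [measure_eq_zero_iff_ae_notMem.1 hμN] with x hx
  simp [hx]

open scoped Classical in
/-- A weak `∗`-upper gradient `ρ ∈ L^∞(μ)` of a Lipschitz function `f` has a
`μ`-a.e. representative that is a genuine `∗`-upper gradient: namely
`ρ̃ = LIP(f)·χ_N + ρ·χ_{X∖N}` for a suitable Borel `μ`-null set `N`. -/
theorem weakStarUG_ae_representative
    [CompleteSpace X] [TopologicalSpace.SeparableSpace X]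
    (μ : Measure X) (hμ : ∀ s : Set X, Bornology.IsBounded s → μ s < ⊤)
    (f : X → ℝ) (hf : ∃ K : ℝ≥0, LipschitzWith K f)
    (ρ : X → ℝ≥0∞) (hmeas : Measurable ρ) (hbdd : essSup ρ μ < ⊤)
    (hUG : IsWeakStarUG μ f ρ) :
    ∃ N : Set X, MeasurableSet N ∧ μ N = 0 ∧
      IsStarUG f (fun x => if x ∈ N then eLipConst f else ρ x) ∧
      (fun x => if x ∈ N then eLipConst f else ρ x) =ᵐ[μ] ρ :=
  weakStarUG_ae_representative_general μ f hf ρ hUG
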